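/- Let X, s, m, n be positive integers with m ≥ n and set κ = X / gcd(s, X). Let P_X be the strided mask with stride X and let TB be a thread-block of size m×n with anchor (x₀, y₀) ∈ P_X and stretch factor s. Then |Cov(TB)| = ⌈(m−n+1)/κ⌉·n + Σ_{k=⌈(m−n+1)/κ⌉}^{⌈(m−1)/κ⌉} max(m − k·κ, 0) + Σ_{k=1}^{⌈(n−1)/κ⌉} max(n − k·κ, 0). -/

import Mathlib

/-- The compute set of an `m × n` thread-block with anchor `(x₀, y₀)`
and stretch factor `s`. -/
def Comp (x₀ y₀ s : ℤ) (m n : ℕ) : Set (ℤ × ℤ) :=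
  {p | ∃ i j : ℕ, i < n ∧ j < m ∧ p = (x₀ + i * s, y₀ + j * s)}

/-- The strided mask with stride `X`. -/
def stridedMask (X : ℕ) : Set (ℤ × ℤ) :=
  {p | (X : ℤ) ∣ p.1 - p.2}

/-!
Since `(x₀, y₀)` lies on the mask, `(x₀ + i s, y₀ + j s)` does iff `X ∣ (i - j) s`, i.e. iff
`κ ∣ i - j`. So the cover is counted by the points of `[0, n) × [0, m)` on the diagonals
`i - j = k κ`. The diagonal `i - j = d` carries `min n (m + d) - max 0 d` points: `n - k κ` for
`d = k κ ≥ 0` (as `n ≤ m`), and `min n (m - k κ)` for `d = -k κ`, which is `n` exactly for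
`k < ⌈(m - n + 1) / κ⌉`. The ceilings `⌈(a - 1) / κ⌉` only cut off the vanishing terms.
-/

open Finset

theorem natCast_dvd_mul_iff_div_gcd_dvd {X : ℕ} (s : ℕ) (hX : 0 < X) (a : ℤ) :
    (X : ℤ) ∣ a * s ↔ ((X / s.gcd X : ℕ) : ℤ) ∣ a := by
  have hdiv : ((X / s.gcd X : ℕ) : ℤ) = X / Int.gcd X s := by
    rw [Int.natCast_div, Int.gcd_natCast_natCast, Nat.gcd_comm]
  constructor
  · intro h
    rw [hdiv, ← Int.modEq_zero_iff_dvd]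
    exact Int.ModEq.cancel_right_div_gcd (by exact_mod_cast hX)
      (by simpa using Int.modEq_zero_iff_dvd.mpr h)
  · rintro ⟨c, rfl⟩
    have hκs : X / s.gcd X * s = X * (s / s.gcd X) := by
      rw [Nat.div_mul_right_comm (Nat.gcd_dvd_right s X),
        Nat.mul_div_assoc _ (Nat.gcd_dvd_left s X)]
    exact ⟨(s / s.gcd X : ℕ) * c, by
      rw [mul_right_comm, ← Nat.cast_mul, hκs]; push_cast; ring⟩

theorem mem_stridedMask_add_mul_iff {X : ℕ} (s : ℕ) (hX : 0 < X) {x₀ y₀ : ℤ}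
    (h : (x₀, y₀) ∈ stridedMask X) (i j : ℤ) :
    (x₀ + i * s, y₀ + j * s) ∈ stridedMask X ↔ ((X / s.gcd X : ℕ) : ℤ) ∣ i - j := by
  change (X : ℤ) ∣ x₀ + i * s - (y₀ + j * s) ↔ _
  rw [show x₀ + i * s - (y₀ + j * s) = (x₀ - y₀) + (i - j) * s by ring,
    dvd_add_right h, natCast_dvd_mul_iff_div_gcd_dvd s hX]

theorem ncard_comp_inter_stridedMask {X s : ℕ} (hX : 0 < X) (hs : 0 < s) {x₀ y₀ : ℤ}
    (h : (x₀, y₀) ∈ stridedMask X) (m n : ℕ) :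
    (Comp x₀ y₀ s m n ∩ stridedMask X).ncard =
      #{p ∈ range n ×ˢ range m | ((X / s.gcd X : ℕ) : ℤ) ∣ (p.1 : ℤ) - p.2} := by
  set e : ℕ × ℕ → ℤ × ℤ := fun p => (x₀ + p.1 * (s : ℤ), y₀ + p.2 * (s : ℤ))
  have he : Function.Injective e := by
    rintro ⟨i, j⟩ ⟨i', j'⟩ hij
    simp only [e, Prod.mk.injEq, add_right_inj, mul_left_inj' (by positivity : (s : ℤ) ≠ 0),
      Nat.cast_inj] at hij
    rw [hij.1, hij.2]
  rw [← card_image_of_injective _ he, ← Set.ncard_coe_finset]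
  congr 1
  ext p
  simp only [Comp, Set.mem_inter_iff, Set.mem_ofPred_eq, coe_image, coe_filter, Set.mem_image,
    mem_product, mem_range, Prod.exists]
  constructor
  · rintro ⟨⟨i, j, hi, hj, rfl⟩, hp⟩
    exact ⟨i, j, ⟨⟨hi, hj⟩, (mem_stridedMask_add_mul_iff s hX h i j).1 hp⟩, rfl⟩
  · rintro ⟨i, j, ⟨⟨hi, hj⟩, hij⟩, rfl⟩
    exact ⟨⟨i, j, hi, hj, rfl⟩, (mem_stridedMask_add_mul_iff s hX h i j).2 hij⟩

theorem card_filter_sub_eq (m n : ℕ) (d : ℤ) :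
    (#{p ∈ range n ×ˢ range m | (p.1 : ℤ) - p.2 = d} : ℤ) =
      max (min (n : ℤ) (m + d) - max 0 d) 0 := by
  rw [← Int.toNat_eq_max, ← Int.card_Ico]
  congr 1
  refine card_bij' (fun p _ => (p.1 : ℤ)) (fun i _ => (i.toNat, (i - d).toNat)) ?_ ?_ ?_ ?_ <;>
    simp only [mem_filter, mem_product, mem_range, mem_Ico, Prod.forall, Prod.mk.injEq] <;> omega

theorem card_filter_dvd_sub_eq_sum (κ m n : ℕ) (hκ : 0 < κ) :
    #{p ∈ range n ×ˢ range m | (κ : ℤ) ∣ (p.1 : ℤ) - p.2} =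
      ∑ k ∈ Icc (-(m : ℤ)) n, #{p ∈ range n ×ˢ range m | (p.1 : ℤ) - p.2 = k * κ} := by
  have hκ' : (κ : ℤ) ≠ 0 := by positivity
  have hfiber (x k : ℤ) : (κ : ℤ) ∣ x ∧ x / κ = k ↔ x = k * κ :=
    ⟨fun ⟨hdvd, hk⟩ => (Int.ediv_eq_iff_eq_mul_left hκ' hdvd).1 hk,
      by rintro rfl; exact ⟨dvd_mul_left _ _, Int.mul_ediv_cancel _ hκ'⟩⟩
  rw [card_eq_sum_card_fiberwise (f := fun p => ((p.1 : ℤ) - p.2) / κ)]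
  · refine sum_congr rfl fun k _ => congrArg card ?_
    rw [filter_filter]
    exact filter_congr fun p _ => hfiber _ k
  · rintro ⟨i, j⟩ hp
    simp only [coe_filter, mem_product, mem_range, Set.mem_ofPred_eq] at hp
    obtain ⟨⟨hi, hj⟩, c, hc⟩ := hp
    have hκ1 : (1 : ℤ) ≤ κ := by exact_mod_cast hκ
    simp only [coe_Icc, Set.mem_Icc, hc, Int.mul_ediv_cancel_left _ hκ']
    constructor <;> nlinarith

theorem sum_Icc_neg_natCast_eq {M : Type*} [AddCommMonoid M] (f : ℤ → M) (a b : ℕ) :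
    ∑ k ∈ Icc (-(a : ℤ)) b, f k =
      ∑ k ∈ Icc (1 : ℤ) a, f (-k) + f 0 + ∑ k ∈ Icc (1 : ℤ) b, f k := by
  have hsplit :
      Icc (-(a : ℤ)) b = (Icc (1 : ℤ) a).map (Equiv.neg ℤ).toEmbedding ∪ {0} ∪ Icc 1 b := by
    ext k
    simp only [mem_union, mem_map_equiv, mem_Icc, mem_singleton, Equiv.neg_symm, Equiv.neg_apply]
    omega
  rw [hsplit, sum_union, sum_union, sum_map, sum_singleton]
  · rfl
  all_goals
    simp only [disjoint_left, mem_union, mem_map_equiv, mem_Icc, mem_singleton, Equiv.neg_symm,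
      Equiv.neg_apply]
    omega

theorem ceil_div_natCast_le_iff {α : Type*} [Field α] [LinearOrder α] [IsStrictOrderedRing α]
    [FloorRing α] {q : α} {κ : ℕ} (hκ : 0 < κ) (k : ℤ) :
    ⌈q / κ⌉ ≤ k ↔ q ≤ k * κ := by
  rw [Int.ceil_le, div_le_iff₀ (by exact_mod_cast hκ)]

theorem sum_Icc_max_sub_mul_eq_sum_Icc_ceil (κ a : ℕ) (hκ : 0 < κ) (L : ℤ) :
    ∑ k ∈ Icc L a, max ((a : ℤ) - k * κ) 0 =
      ∑ k ∈ Icc L ⌈((a : ℚ) - 1) / κ⌉, max ((a : ℤ) - k * κ) 0 := by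
  have hC (k : ℤ) : ⌈((a : ℚ) - 1) / κ⌉ ≤ k ↔ (a : ℤ) - 1 ≤ k * κ := by
    rw [ceil_div_natCast_le_iff hκ]
    exact_mod_cast Iff.rfl
  have hCa : ⌈((a : ℚ) - 1) / κ⌉ ≤ a := (hC a).2 (by nlinarith)
  refine (sum_subset (Icc_subset_Icc_right hCa) fun k hk hk' => ?_).symm
  simp only [mem_Icc, not_and, not_le] at hk hk'
  have := (hC (k - 1)).1 (by omega)
  rw [sub_mul, one_mul] at this
  omega

theorem sum_Icc_max_min_sub_mul_eq (κ m n : ℕ) (hκ : 0 < κ) (hmn : n ≤ m) :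
    ∑ k ∈ Icc (1 : ℤ) m, max (min (n : ℤ) (m - k * κ)) 0 =
      (⌈((m : ℚ) - n + 1) / κ⌉ - 1) * n
        + ∑ k ∈ Icc ⌈((m : ℚ) - n + 1) / κ⌉ m, max ((m : ℤ) - k * κ) 0 := by
  set K := ⌈((m : ℚ) - n + 1) / κ⌉
  have hK (k : ℤ) : K ≤ k ↔ (m : ℤ) - n + 1 ≤ k * κ := by
    rw [ceil_div_natCast_le_iff hκ]
    exact_mod_cast Iff.rfl
  have hK1 : 1 ≤ K := by
    by_contra! h
    have := (hK 0).1 (by omega)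
    omega
  have hKm : K ≤ m + 1 := (hK _).2 (by nlinarith)
  rw [← sum_filter_add_sum_filter_not _ (· < K)]
  congr 1
  · have hfilter : {k ∈ Icc (1 : ℤ) m | k < K} = Ico 1 K := by
      ext k; simp only [mem_filter, mem_Icc, mem_Ico]; omega
    rw [hfilter, sum_congr rfl fun k hk => ?_, sum_const, Int.card_Ico, nsmul_eq_mul]
    · rw [Int.toNat_of_nonneg (by omega)]
    · have := (hK k).not.1 (not_le.2 (mem_Ico.1 hk).2)
      omega
  · have hfilter : {k ∈ Icc (1 : ℤ) m | ¬k < K} = Icc K m := by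
      ext k; simp only [mem_filter, mem_Icc]; omega
    rw [hfilter]
    refine sum_congr rfl fun k hk => ?_
    have := (hK k).1 (mem_Icc.1 hk).1
    omega

theorem card_filter_dvd_sub_eq (κ m n : ℕ) (hκ : 0 < κ) (hmn : n ≤ m) :
    (#{p ∈ range n ×ˢ range m | (κ : ℤ) ∣ (p.1 : ℤ) - p.2} : ℤ) =
      ⌈((m : ℚ) - n + 1) / κ⌉ * n
        + ∑ k ∈ Icc ⌈((m : ℚ) - n + 1) / κ⌉ ⌈((m : ℚ) - 1) / κ⌉, max ((m : ℤ) - k * κ) 0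
        + ∑ k ∈ Icc (1 : ℤ) ⌈((n : ℚ) - 1) / κ⌉, max ((n : ℤ) - k * κ) 0 := by
  rw [card_filter_dvd_sub_eq_sum κ m n hκ, Nat.cast_sum, sum_Icc_neg_natCast_eq]
  have hupper : ∀ k ∈ Icc (1 : ℤ) n,
      (#{p ∈ range n ×ˢ range m | (p.1 : ℤ) - p.2 = k * κ} : ℤ) = max ((n : ℤ) - k * κ) 0 := by
    intro k hk
    have : 0 ≤ k * κ := mul_nonneg (by linarith [(mem_Icc.1 hk).1]) (by positivity)
    rw [card_filter_sub_eq]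
    omega
  have hlower : ∀ k ∈ Icc (1 : ℤ) m,
      (#{p ∈ range n ×ˢ range m | (p.1 : ℤ) - p.2 = -k * κ} : ℤ) =
        max (min (n : ℤ) (m - k * κ)) 0 := by
    intro k hk
    have : 0 ≤ k * κ := mul_nonneg (by linarith [(mem_Icc.1 hk).1]) (by positivity)
    rw [card_filter_sub_eq, neg_mul]
    omega
  rw [sum_congr rfl hupper, sum_congr rfl hlower, sum_Icc_max_min_sub_mul_eq κ m n hκ hmn,
    sum_Icc_max_sub_mul_eq_sum_Icc_ceil κ m hκ, sum_Icc_max_sub_mul_eq_sum_Icc_ceil κ n hκ,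
    card_filter_sub_eq]
  simp only [zero_mul, add_zero, max_self, sub_zero, min_eq_left (Nat.cast_le.2 hmn)]
  rw [max_eq_left (Nat.cast_nonneg n)]
  ring

theorem cover_card_strided_general_general
    (X s m n : ℕ) (hX : 0 < X) (hs : 0 < s) (hmn : n ≤ m)
    (κ : ℕ) (hκ : κ = X / Nat.gcd s X)
    (x₀ y₀ : ℤ) (hanchor : (x₀, y₀) ∈ stridedMask X) :
    ((Comp x₀ y₀ (s : ℤ) m n ∩ stridedMask X).ncard : ℤ) =
      ⌈((m : ℚ) - n + 1) / κ⌉ * n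
        + ∑ k ∈ Finset.Icc ⌈((m : ℚ) - n + 1) / κ⌉ ⌈((m : ℚ) - 1) / κ⌉,
            max ((m : ℤ) - k * κ) 0
        + ∑ k ∈ Finset.Icc (1 : ℤ) ⌈((n : ℚ) - 1) / κ⌉,
            max ((n : ℤ) - k * κ) 0 := by
  have hκ0 : 0 < κ :=
    hκ ▸ Nat.div_pos (Nat.gcd_le_right (m := s) hX) (Nat.gcd_pos_of_pos_right s hX)
  rw [ncard_comp_inter_stridedMask hX hs hanchor, ← hκ, card_filter_dvd_sub_eq κ m n hκ0 hmn]

/-- Exact cover size of a thread-block anchored on a strided mask with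
stride `X` and arbitrary positive stretch factor `s`, where
`κ = X / gcd(s, X)`, for `m ≥ n`. -/
theorem cover_card_strided_general
    (X s m n : ℕ) (hX : 0 < X) (hs : 0 < s) (hm : 0 < m) (hn : 0 < n) (hmn : n ≤ m)
    (κ : ℕ) (hκ : κ = X / Nat.gcd s X)
    (x₀ y₀ : ℤ) (hanchor : (x₀, y₀) ∈ stridedMask X) :
    ((Comp x₀ y₀ (s : ℤ) m n ∩ stridedMask X).ncard : ℤ) =
      ⌈((m : ℚ) - n + 1) / κ⌉ * n
        + ∑ k ∈ Finset.Icc ⌈((m : ℚ) - n + 1) / κ⌉ ⌈((m : ℚ) - 1) / κ⌉,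
            max ((m : ℤ) - k * κ) 0
        + ∑ k ∈ Finset.Icc (1 : ℤ) ⌈((n : ℚ) - 1) / κ⌉,
            max ((n : ℤ) - k * κ) 0 :=
  cover_card_strided_general_general X s m n hX hs hmn κ hκ x₀ y₀ hanchor
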